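/- arXiv:1412.5476 — 4 statements merged into one kernel-verified Lean document; each statement's English description precedes it below -/
import Mathlib

section
/- Let a countable group G act by measurable measure-preserving transformations on a standard Borel probability space (X, μ). Then the action is totally non-free if and only if it is extremely non-free. -/
open MeasureTheory
open scoped symmDiff

/-- The set of fixed points of the action of `g` on `X`. -/
def fixedSet (G : Type*) {X : Type*} [SMul G X] (g : G) : Set X := {x : X | g • x = x}

/-- An action is totally non-free if every measurable set agrees, up to a `μ`-null symmetric
difference, with a set in the σ-algebra generated by the fixed-point sets `Fix(g)`, `g ∈ G`. -/
def TotallyNonFree (G : Type*) {X : Type*} [SMul G X] [MeasurableSpace X]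
    (μ : Measure X) : Prop :=
  ∀ B : Set X, MeasurableSet B →
    ∃ A : Set X,
      MeasurableSet[MeasurableSpace.generateFrom {s : Set X | ∃ g : G, s = fixedSet G g}] A ∧
      μ (A ∆ B) = 0

/-- An action is extremely non-free if on a conull set, distinct points have distinct
stabilizers. -/
def ExtremelyNonFree (G : Type*) {X : Type*} [Group G] [MulAction G X] [MeasurableSpace X]
    (μ : Measure X) : Prop :=
  ∃ A : Set X, MeasurableSet A ∧ μ A = 1 ∧
    ∀ x ∈ A, ∀ y ∈ A, x ≠ y → MulAction.stabilizer G x ≠ MulAction.stabilizer G y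

section Aux

variable {G X : Type*}

/-- The map recording, for each point `x`, the set of group elements fixing `x`. -/
noncomputable def stabMap (G : Type*) {X : Type*} [SMul G X] : X → G → Bool :=
  fun x g => @decide (g • x = x) (Classical.propDecidable _)

lemma stabMap_preimage_true [SMul G X] (g : G) :
    (fun x : X => stabMap G x g) ⁻¹' {true} = fixedSet G g := by
  ext x; simp [stabMap, fixedSet]

lemma stabMap_preimage_false [SMul G X] (g : G) :
    (fun x : X => stabMap G x g) ⁻¹' {false} = (fixedSet G g)ᶜ := by
  ext x; simp [stabMap, fixedSet]

/-- `stabMap` is measurable for the σ-algebra generated by the fixed-point sets. -/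
lemma stabMap_measurable_gen [SMul G X] :
    @Measurable X (G → Bool)
      (MeasurableSpace.generateFrom {s : Set X | ∃ g : G, s = fixedSet G g}) _ (stabMap G) := by
  letI m : MeasurableSpace X :=
    MeasurableSpace.generateFrom {s : Set X | ∃ g : G, s = fixedSet G g}
  refine measurable_pi_lambda _ fun g => measurable_to_countable' fun b => ?_
  rcases Bool.dichotomy b with rfl | rfl
  · rw [stabMap_preimage_false g]
    exact (MeasurableSpace.measurableSet_generateFrom
      (s := {s : Set X | ∃ g : G, s = fixedSet G g}) (t := fixedSet G g) ⟨g, rfl⟩).compl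
  · rw [stabMap_preimage_true g]
    exact MeasurableSpace.measurableSet_generateFrom
      (s := {s : Set X | ∃ g : G, s = fixedSet G g}) (t := fixedSet G g) ⟨g, rfl⟩

lemma stabMap_eq_iff [Group G] [MulAction G X] {x y : X} :
    stabMap G x = stabMap G y ↔ MulAction.stabilizer G x = MulAction.stabilizer G y := by
  constructor
  · intro hxy
    ext g
    have := congrFun hxy g
    simp only [stabMap, decide_eq_decide] at this
    simp [MulAction.mem_stabilizer_iff, this]
  · intro h
    funext g
    have : g • x = x ↔ g • y = y := by
      rw [← MulAction.mem_stabilizer_iff, h, MulAction.mem_stabilizer_iff]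
    simp only [stabMap, decide_eq_decide]
    exact this

/-- Fixed-point sets of measurable self-maps of a standard Borel space are measurable. -/
lemma measurableSet_fixedSet [Group G] [MulAction G X] [MeasurableSpace X] [StandardBorelSpace X]
    (hmeas : ∀ g : G, Measurable fun x : X => g • x) (g : G) :
    MeasurableSet (fixedSet G g : Set X) := by
  letI := upgradeStandardBorel X
  exact (hmeas g).stronglyMeasurable.measurableSet_eq_fun stronglyMeasurable_id

/-- Membership in a set of the σ-algebra generated by the fixed-point sets depends only
on the stabilizer. -/
lemma mem_of_stab_eq [Group G] [MulAction G X] {x y : X}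
    (h : MulAction.stabilizer G x = MulAction.stabilizer G y) {T : Set X}
    (hT : MeasurableSet[MeasurableSpace.generateFrom {s : Set X | ∃ g : G, s = fixedSet G g}] T) :
    x ∈ T ↔ y ∈ T := by
  induction hT with
  | basic t ht =>
    obtain ⟨g, rfl⟩ := ht
    simp only [fixedSet, Set.mem_setOf_eq, ← MulAction.mem_stabilizer_iff, h]
  | empty => simp
  | compl t ht iht => simpa using not_congr iht
  | iUnion s hs ihs => simp only [Set.mem_iUnion]; exact exists_congr ihs

end Aux

/-- For a countable group acting by measurable measure-preserving transformations on a standard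
Borel probability space, the action is totally non-free iff it is extremely non-free. -/
theorem totallyNonFree_iff_extremelyNonFree
    {G X : Type*} [Group G] [Countable G] [MulAction G X]
    [MeasurableSpace X] [StandardBorelSpace X]
    (μ : Measure X) [IsProbabilityMeasure μ]
    (hmeas : ∀ g : G, Measurable fun x : X => g • x)
    (hmp : ∀ g : G, MeasurePreserving (fun x : X => g • x) μ μ) :
    TotallyNonFree G μ ↔ ExtremelyNonFree G μ := by
  classical
  have hgen_le : MeasurableSpace.generateFrom {s : Set X | ∃ g : G, s = fixedSet G g} ≤
      ‹MeasurableSpace X› :=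
    MeasurableSpace.generateFrom_le (by
      rintro t ⟨g, rfl⟩
      exact measurableSet_fixedSet hmeas g)
  constructor
  · -- totally non-free → extremely non-free
    intro h
    obtain ⟨S, hScount, hSmeas, hSsep⟩ :=
      exists_countable_separating X MeasurableSet Set.univ
    haveI : Countable S := hScount.to_subtype
    choose A hAgen hAnull using fun s : S => h s (hSmeas s s.2)
    set N : Set X := ⋃ s : S, (A s ∆ (s : Set X)) with hN
    have hNmeas : MeasurableSet N :=
      MeasurableSet.iUnion fun s => (hgen_le _ (hAgen s)).symmDiff (hSmeas s s.2)
    have hNnull : μ N = 0 := measure_iUnion_null fun s => hAnull s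
    refine ⟨Nᶜ, hNmeas.compl, (prob_compl_eq_one_iff hNmeas).2 hNnull, ?_⟩
    intro x hx y hy hxy hstab
    refine hxy (hSsep x (Set.mem_univ x) y (Set.mem_univ y) fun s hs => ?_)
    have hxs : x ∉ A ⟨s, hs⟩ ∆ s := fun hmem => hx (Set.mem_iUnion.2 ⟨⟨s, hs⟩, hmem⟩)
    have hys : y ∉ A ⟨s, hs⟩ ∆ s := fun hmem => hy (Set.mem_iUnion.2 ⟨⟨s, hs⟩, hmem⟩)
    rw [Set.mem_symmDiff] at hxs hys
    push_neg at hxs hys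
    have hxA : x ∈ A ⟨s, hs⟩ ↔ x ∈ s := ⟨fun h' => hxs.1 h', fun h' => hxs.2 h'⟩
    have hyA : y ∈ A ⟨s, hs⟩ ↔ y ∈ s := ⟨fun h' => hys.1 h', fun h' => hys.2 h'⟩
    rw [← hxA, ← hyA]
    exact mem_of_stab_eq hstab (hAgen ⟨s, hs⟩)
  · -- extremely non-free → totally non-free
    rintro ⟨A, hA, hA1, hinj⟩ B hB
    haveI : StandardBorelSpace A := hA.standardBorel
    have hΦmeas : Measurable (stabMap G : X → G → Bool) :=
      stabMap_measurable_gen.mono hgen_le le_rfl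
    have hψmeas : Measurable (fun a : A => stabMap G (a : X)) :=
      hΦmeas.comp measurable_subtype_coe
    have hψinj : Function.Injective (fun a : A => stabMap G (a : X)) := by
      intro a b hab
      by_contra hne
      exact hinj a a.2 b b.2 (fun h' => hne (Subtype.ext h')) (stabMap_eq_iff.1 hab)
    have hψemb : MeasurableEmbedding (fun a : A => stabMap G (a : X)) :=
      hψmeas.measurableEmbedding hψinj
    have hSmeas : MeasurableSet ((fun a : A => stabMap G (a : X)) '' ((↑) ⁻¹' B : Set A)) :=
      hψemb.measurableSet_image.2 (hB.preimage measurable_subtype_coe)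
    refine ⟨stabMap G ⁻¹' ((fun a : A => stabMap G (a : X)) '' ((↑) ⁻¹' B : Set A)),
      stabMap_measurable_gen hSmeas, ?_⟩
    have hsub : (stabMap G ⁻¹' ((fun a : A => stabMap G (a : X)) '' ((↑) ⁻¹' B : Set A))) ∆ B
        ⊆ Aᶜ := by
      intro x hx hxA
      rw [Set.mem_symmDiff] at hx
      rcases hx with ⟨hxS, hxB⟩ | ⟨hxB, hxS⟩
      · obtain ⟨a, haB, ha⟩ := hxS
        have : a = ⟨x, hxA⟩ := hψinj ha
        exact hxB (by simpa [this] using haB)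
      · exact hxS ⟨⟨x, hxA⟩, hxB, rfl⟩
    exact measure_mono_null hsub ((prob_compl_eq_zero_iff hA).2 hA1)
end

section
/- Let n ≥ 1, let H be a subgroup of the symmetric group on Fin n acting transitively on Fin n, and let A be a nonempty subset of Fin n such that for all g ≠ h in H the cardinality of the symmetric difference of g(A) and h(A) is at most the cardinality of A. Then 2·|A| > n. -/
open scoped symmDiff

set_option maxHeartbeats 1000000 in
open Finset in
/-- If a subgroup `H` of the symmetric group on `Fin n` acts transitively and `A` is a nonempty
subset of `Fin n` such that any two distinct `H`-translates of `A` differ in at most `|A|`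
elements, then `|A| > n / 2`. -/
theorem card_gt_half_of_transitive_small_translates
    (n : ℕ) (hn : 1 ≤ n) (H : Subgroup (Equiv.Perm (Fin n)))
    (htrans : ∀ i j : Fin n, ∃ h ∈ H, h i = j)
    (A : Finset (Fin n)) (hA : A.Nonempty)
    (hdiff : ∀ g ∈ H, ∀ h ∈ H, g ≠ h →
      ((A.image fun i => g i) ∆ (A.image fun i => h i)).card ≤ A.card) :
    n < 2 * A.card := by
  classical
  set K : Finset (Equiv.Perm (Fin n)) := Finset.univ.filter (· ∈ H) with hK
  have hmemK : ∀ g, g ∈ K ↔ g ∈ H := by intro g; simp [hK]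
  have h1K : (1 : Equiv.Perm (Fin n)) ∈ K := (hmemK 1).2 H.one_mem
  set a0 : Fin n := ⟨0, hn⟩ with ha0
  set c : Fin n → Fin n → ℕ := fun a b => (K.filter (fun h => h a = b)).card with hc
  set s : ℕ := c a0 a0 with hs
  -- all fibers have the same size
  have hcab : ∀ a b : Fin n, c a b = s := by
    intro a b
    obtain ⟨k, hkH, hk⟩ := htrans a0 a
    obtain ⟨m, hmH, hm⟩ := htrans b a0
    apply Finset.card_bij' (fun h _ => m * h * k) (fun h' _ => m⁻¹ * h' * k⁻¹)
    · intro h hh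
      simp only [Finset.mem_filter] at hh ⊢
      refine ⟨(hmemK _).2 (H.mul_mem (H.mul_mem hmH ((hmemK h).1 hh.1)) hkH), ?_⟩
      simp [Equiv.Perm.mul_apply, hk, hh.2, hm]
    · intro h hh
      simp only [Finset.mem_filter] at hh ⊢
      refine ⟨(hmemK _).2 (H.mul_mem (H.mul_mem (H.inv_mem hmH) ((hmemK h).1 hh.1))
        (H.inv_mem hkH)), ?_⟩
      have hk' : k⁻¹ a = a0 := by rw [← hk]; simp
      have hm' : m⁻¹ a0 = b := by rw [← hm]; simp
      simp [Equiv.Perm.mul_apply, hk', hh.2, hm']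
    · intro h hh; simp [mul_assoc]
    · intro h hh; simp [mul_assoc]
  have hs1 : 1 ≤ s :=
    Finset.card_pos.2 ⟨1, Finset.mem_filter.2 ⟨h1K, rfl⟩⟩
  -- |K| = n * s
  have hKcard : K.card = n * s := by
    have := Finset.card_eq_sum_card_fiberwise
      (s := K) (t := (Finset.univ : Finset (Fin n))) (f := fun h => h a0)
      (fun x _ => Finset.mem_univ _)
    rw [this]
    rw [Finset.sum_congr rfl (fun b _ => hcab a0 b)]
    simp [mul_comm]
  -- each summand for a ∈ A
  have hfiber : ∀ a : Fin n, (K.filter (fun h => h a ∈ A)).card = A.card * s := by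
    intro a
    have hmaps : ∀ x ∈ K.filter (fun h => h a ∈ A), x a ∈ A := by
      intro x hx
      exact (Finset.mem_filter.1 hx).2
    rw [Finset.card_eq_sum_card_fiberwise hmaps]
    have : ∀ b ∈ A, ((K.filter (fun h => h a ∈ A)).filter (fun h => h a = b)).card = s := by
      intro b hb
      rw [← hcab a b, hc]
      have heq : ((K.filter (fun h => h a ∈ A)).filter (fun h => h a = b))
          = K.filter (fun h => h a = b) := by
        rw [Finset.filter_filter]
        apply Finset.filter_congr
        intro h _
        constructor
        · rintro ⟨_, h2⟩; exact h2
        · intro h2; exact ⟨h2 ▸ hb, h2⟩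
      rw [heq]
    rw [Finset.sum_congr rfl this]
    simp [mul_comm]
  -- total sum S
  have himg : ∀ h : Equiv.Perm (Fin n), ((A.image fun i => h i) ∩ A).card
      = (A.filter (fun a => h a ∈ A)).card := by
    intro h
    have : (A.image fun i => h i) ∩ A = (A.filter (fun a => h a ∈ A)).image (fun i => h i) := by
      ext x
      simp only [Finset.mem_inter, Finset.mem_image, Finset.mem_filter]
      constructor
      · rintro ⟨⟨a, ha, rfl⟩, hx⟩; exact ⟨a, ⟨ha, hx⟩, rfl⟩
      · rintro ⟨a, ⟨ha, hxa⟩, rfl⟩; exact ⟨⟨a, ha, rfl⟩, hxa⟩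
    rw [this, Finset.card_image_of_injective _ h.injective]
  have hSsum : ∑ h ∈ K, ((A.image fun i => h i) ∩ A).card = A.card * (A.card * s) := by
    calc ∑ h ∈ K, ((A.image fun i => h i) ∩ A).card
        = ∑ h ∈ K, ∑ a ∈ A, (if h a ∈ A then 1 else 0) := by
          refine Finset.sum_congr rfl fun h _ => ?_
          rw [himg h, Finset.card_filter]
      _ = ∑ a ∈ A, ∑ h ∈ K, (if h a ∈ A then 1 else 0) := Finset.sum_comm
      _ = ∑ a ∈ A, (K.filter (fun h => h a ∈ A)).card := by
          refine Finset.sum_congr rfl fun a _ => ?_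
          rw [Finset.card_filter]
      _ = ∑ a ∈ A, A.card * s := Finset.sum_congr rfl fun a _ => hfiber a
      _ = A.card * (A.card * s) := by simp [mul_comm]
  -- lower bound for each h ≠ 1
  have hlow : ∀ h ∈ K, h ≠ 1 → A.card ≤ 2 * ((A.image fun i => h i) ∩ A).card := by
    intro h hh hne
    have h1 : ((A.image fun i => h i) ∆ (A.image fun i => (1 : Equiv.Perm (Fin n)) i)).card
        ≤ A.card := hdiff h ((hmemK h).1 hh) 1 H.one_mem hne
    have himg1 : (A.image fun i => (1 : Equiv.Perm (Fin n)) i) = A := by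
      simp
    rw [himg1] at h1
    set B := A.image fun i => h i with hB
    have hBcard : B.card = A.card := Finset.card_image_of_injective _ h.injective
    have hsd : (B ∆ A).card + (B ∩ A).card = (B ∪ A).card := by
      rw [symmDiff_eq_sup_sdiff_inf]
      show ((B ∪ A) \ (B ∩ A)).card + (B ∩ A).card = (B ∪ A).card
      rw [Finset.card_sdiff_of_subset (Finset.inter_subset_union)]
      have hle : (B ∩ A).card ≤ (B ∪ A).card :=
        Finset.card_le_card Finset.inter_subset_union
      omega
    have := Finset.card_inter_add_card_union B A
    omega
  -- combine: (K.card + 1) * A.card ≤ 2 * S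
  have hmain : (K.card + 1) * A.card ≤ 2 * (A.card * (A.card * s)) := by
    rw [← hSsum, Finset.mul_sum]
    rw [← Finset.add_sum_erase _ _ h1K]
    have hterm1 : ((A.image fun i => (1 : Equiv.Perm (Fin n)) i) ∩ A).card = A.card := by
      simp
    rw [hterm1]
    have : ∑ h ∈ K.erase 1, A.card ≤ ∑ h ∈ K.erase 1, 2 * ((A.image fun i => h i) ∩ A).card :=
      Finset.sum_le_sum fun h hh =>
        hlow h (Finset.mem_of_mem_erase hh) (Finset.ne_of_mem_erase hh)
    have hKe : (K.erase 1).card = K.card - 1 := Finset.card_erase_of_mem h1K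
    have hK1 : 1 ≤ K.card := Finset.card_pos.2 ⟨1, h1K⟩
    have hsum_const : ∑ h ∈ K.erase 1, A.card = (K.card - 1) * A.card := by
      rw [Finset.sum_const, hKe, smul_eq_mul]
    have hid : (K.card - 1) * A.card + 2 * A.card = (K.card + 1) * A.card := by
      rw [← Nat.add_mul]
      congr 1
      omega
    omega
  rw [hKcard] at hmain
  have hA1 : 1 ≤ A.card := Finset.card_pos.2 hA
  by_contra hcon
  push_neg at hcon
  have h2 : 2 * (A.card * (A.card * s)) ≤ n * (A.card * s) := by
    calc 2 * (A.card * (A.card * s)) = (2 * A.card) * (A.card * s) := by ring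
      _ ≤ n * (A.card * s) := Nat.mul_le_mul_right _ hcon
  have h3 : (n * s + 1) * A.card = n * (A.card * s) + A.card := by ring
  omega
end

section
/- Let a countable group G act by measurable measure-preserving transformations on a standard Borel probability space (X, μ), and assume the action is absolutely non-free. Then for every n ≥ 1 the symmetrized diagonal action is totally non-free; precisely: for every measurable set E ⊆ X^n that is invariant under all permutations of the n coordinates, there exists a set A in the σ-algebra generated by the sets Fix(g)^n = Fix(g)×⋯×Fix(g) ⊆ X^n, g ∈ G, such that μ^n(E Δ A) = 0, where μ^n is the n-fold product measure. -/
open MeasureTheory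
open scoped symmDiff ENNReal

/-- An action is absolutely non-free if every measurable set can be approximated in measure,
arbitrarily well, by fixed-point sets of group elements. -/
def AbsolutelyNonFree (G : Type*) {X : Type*} [SMul G X] [MeasurableSpace X]
    (μ : Measure X) : Prop :=
  ∀ A : Set X, MeasurableSet A → ∀ ε : ℝ≥0∞, 0 < ε → ∃ g : G, μ (fixedSet G g ∆ A) < ε

/-- The `n`-fold power `Fix(g)ⁿ = Fix(g) × ⋯ × Fix(g)` of the fixed-point set of `g`. -/
def fixedPow (G : Type*) {X : Type*} [SMul G X] (n : ℕ) (g : G) : Set (Fin n → X) :=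
  {x : Fin n → X | ∀ i : Fin n, g • x i = x i}

/-! Absolute non-freeness gives `μ (B ∆ Fix(g)) < ε / n` for any measurable `B`, hence
`μⁿ (Bⁿ ∆ Fix(g)ⁿ) < ε`: every power `Bⁿ` lies, up to a null set, in the σ-algebra generated by
the sets `Fix(g)ⁿ`. It also rules out atoms: if `μ {a} > 0`, an element `g` whose fixed-point set
is close to `{a}ᶜ` fixes every point of mass `μ {a}` except `a`, and `g • a` is such a point.

Without atoms the diagonals `xᵢ = xⱼ` of `Xⁿ` are null, and refining a countable generating
family shows that every measurable `E ⊆ Xⁿ` is approximated by finite unions of boxes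
`B₁ × ⋯ × Bₙ` with pairwise disjoint sides. The union of all coordinate permutations of such a box
is `(⋃ Bⱼ)ⁿ ∩ ⋂ᵢ ((⋃_{j ≠ i} Bⱼ)ⁿ)ᶜ`, a Boolean combination of powers, and when `E` is symmetric
the permuted approximation is at most `n!` times worse. -/

open MeasurableSpace Set Filter Function
open scoped Topology

section NullClosure

variable {α : Type*} {m mα : MeasurableSpace α}

abbrev MeasureTheory.Measure.nullClosure (ν : Measure[mα] α) (m : MeasurableSpace α) :
    MeasurableSpace α where
  MeasurableSet' T := ∃ A, MeasurableSet[m] A ∧ ν (T ∆ A) = 0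
  measurableSet_empty := ⟨∅, @MeasurableSet.empty _ m, by simp⟩
  measurableSet_compl _ := fun ⟨A, hA, hTA⟩ => ⟨Aᶜ, hA.compl, by rwa [compl_symmDiff_compl]⟩
  measurableSet_iUnion T hT := by
    choose A hA hTA using hT
    exact ⟨⋃ k, A k, .iUnion hA,
      measure_mono_null iSup_symmDiff_iSup_le (measure_iUnion_null hTA)⟩

theorem MeasureTheory.Measure.le_nullClosure (ν : Measure[mα] α) (m : MeasurableSpace α) :
    m ≤ ν.nullClosure m :=
  fun A hA => ⟨A, hA, by simp⟩

theorem MeasureTheory.Measure.measurableSet_nullClosure_of_forall_approx {ν : Measure α}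
    {E : Set α}
    (h : ∀ ε : ℝ≥0∞, 0 < ε → ∃ A, MeasurableSet[ν.nullClosure m] A ∧ ν (E ∆ A) ≤ ε) :
    MeasurableSet[ν.nullClosure m] E := by
  have hm : ∀ k : ℕ, ∃ A, MeasurableSet[m] A ∧ ν (E ∆ A) ≤ 2⁻¹ ^ k := fun k => by
    obtain ⟨A, ⟨A', hA', hAA'⟩, hEA⟩ := h (2⁻¹ ^ k) (ENNReal.pow_pos (by norm_num) k)
    exact ⟨A', hA', (measure_symmDiff_le E A A').trans (by rwa [hAA', add_zero])⟩
  choose A hA hEA using hm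
  have hsub : E ∆ limsup A atTop ⊆ limsup (fun k => E ∆ A k) atTop := by
    intro x hx
    simp only [mem_limsup_iff_frequently_mem, Set.mem_symmDiff] at hx ⊢
    rcases hx with ⟨hxE, hxA⟩ | ⟨hxA, hxE⟩
    · exact (not_frequently.1 hxA).frequently.mono fun k hk => Or.inl ⟨hxE, hk⟩
    · exact hxA.mono fun k hk => Or.inr ⟨hk, hxE⟩
  have hsum : ∑' k, ν (E ∆ A k) ≠ ∞ :=
    ne_top_of_le_ne_top (by
      rw [ENNReal.tsum_geometric, ENNReal.one_sub_inv_two, inv_inv]; exact ENNReal.ofNat_ne_top)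
      (ENNReal.tsum_le_tsum hEA)
  exact ⟨limsup A atTop, @MeasurableSet.measurableSet_limsup _ m _ hA,
    measure_mono_null hsub (measure_limsup_atTop_eq_zero hsum)⟩

end NullClosure

section Pi

variable {ι : Type*} [Fintype ι]

theorem measure_pi_symmDiff_pi_le {X : ι → Type*} [∀ i, MeasurableSpace (X i)]
    (μ : ∀ i, Measure (X i)) [∀ i, IsProbabilityMeasure (μ i)] (B B' : ∀ i, Set (X i)) :
    Measure.pi μ (univ.pi B ∆ univ.pi B') ≤ ∑ i, μ i (B i ∆ B' i) := by
  have hsub : univ.pi B ∆ univ.pi B' ⊆ ⋃ i, Function.eval i ⁻¹' (B i ∆ B' i) := by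
    intro x hx
    by_contra! h
    simp only [mem_iUnion, mem_preimage, Function.eval, Set.mem_symmDiff, not_exists, not_or,
      not_and_not_right] at h
    simp only [Set.mem_symmDiff, mem_univ_pi, not_forall] at hx
    rcases hx with ⟨hB, i, hi⟩ | ⟨hB', i, hi⟩
    · exact hi ((h i).1 (hB i))
    · exact hi ((h i).2 (hB' i))
  calc _ ≤ ∑ i, Measure.pi μ (Function.eval i ⁻¹' (B i ∆ B' i)) :=
        (measure_mono hsub).trans (measure_iUnion_fintype_le _ _)
    _ ≤ _ := Finset.sum_le_sum fun i _ => (measurePreserving_eval μ i).measure_preimage_le _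

variable {X : Type*} [MeasurableSpace X] (μ : Measure X)

theorem measurePreserving_comp_perm [SigmaFinite μ] (σ : Equiv.Perm ι) :
    MeasurePreserving (fun x : ι → X => x ∘ σ) (Measure.pi fun _ => μ)
      (Measure.pi fun _ => μ) := by
  convert measurePreserving_piCongrLeft (fun _ : ι => μ) σ.symm using 1
  ext x i
  simp [MeasurableEquiv.coe_piCongrLeft, Equiv.piCongrLeft_apply]

theorem measure_pi_setOf_apply_eq_apply [IsProbabilityMeasure μ] [NullSingletonClass μ]
    [MeasurableEq X] {i j : ι} (hij : i ≠ j) :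
    Measure.pi (fun _ => μ) {x : ι → X | x i = x j} = 0 := by
  have hpair : (Measure.pi fun _ => μ).map (fun x : ι → X => (x i, x j)) = μ.prod μ := by
    have hind := (ProbabilityTheory.iIndepFun_pi (μ := fun _ => μ) (X := fun _ => id)
      fun _ => aemeasurable_id).indepFun hij
    convert hind.map_prod_eq_prod_map_map (measurable_pi_apply i).aemeasurable
      (measurable_pi_apply j).aemeasurable using 2
    exacts [(measurePreserving_eval (fun _ => μ) i).map_eq.symm,
      (measurePreserving_eval (fun _ => μ) j).map_eq.symm]
  have hdiag : μ.prod μ (diagonal X) = 0 := by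
    have hslice : ∀ x, Prod.mk x ⁻¹' diagonal X = {x} := fun x => by ext; simp [eq_comm]
    simp [Measure.prod_apply measurableSet_diagonal, hslice]
  rw [← hdiag, ← hpair, Measure.map_apply (by fun_prop) measurableSet_diagonal]
  rfl

end Pi

section PermSaturation

variable {ι X : Type*}

def permSaturation (F : Set (ι → X)) : Set (ι → X) :=
  ⋃ σ : Equiv.Perm ι, (fun x => x ∘ σ) ⁻¹' F

theorem permSaturation_biUnion {κ : Type*} (K : Set κ) (F : κ → Set (ι → X)) :
    permSaturation (⋃ k ∈ K, F k) = ⋃ k ∈ K, permSaturation (F k) := by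
  ext x
  simp only [permSaturation, mem_iUnion, mem_preimage, exists_prop]
  exact ⟨fun ⟨σ, k, hk, h⟩ => ⟨k, hk, σ, h⟩, fun ⟨k, hk, σ, h⟩ => ⟨σ, k, hk, h⟩⟩

theorem measure_symmDiff_permSaturation_le [Fintype ι] [DecidableEq ι] [MeasurableSpace X]
    (μ : Measure X) [SigmaFinite μ] {E : Set (ι → X)}
    (hE : ∀ σ : Equiv.Perm ι, (fun x => x ∘ σ) ⁻¹' E = E) (F : Set (ι → X)) :
    Measure.pi (fun _ => μ) (E ∆ permSaturation F) ≤
      Fintype.card (Equiv.Perm ι) * Measure.pi (fun _ => μ) (E ∆ F) := by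
  have hsub : E ∆ permSaturation F ⊆ ⋃ σ : Equiv.Perm ι, (fun x => x ∘ σ) ⁻¹' (E ∆ F) :=
    symmDiff_iSup_le.trans (iUnion_mono fun σ => by rw [preimage_symmDiff, hE σ])
  calc _ ≤ ∑ σ : Equiv.Perm ι, Measure.pi (fun _ => μ) ((fun x => x ∘ σ) ⁻¹' (E ∆ F)) :=
        (measure_mono hsub).trans (measure_iUnion_fintype_le _ _)
    _ ≤ ∑ _ : Equiv.Perm ι, Measure.pi (fun _ => μ) (E ∆ F) :=
        Finset.sum_le_sum fun σ _ => (measurePreserving_comp_perm μ σ).measure_preimage_le _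
    _ = _ := by simp

theorem permSaturation_pi_of_pairwise_disjoint [Finite ι] {B : ι → Set X}
    (hB : Pairwise (Disjoint on B)) :
    permSaturation (univ.pi B) =
      (univ.pi fun _ => ⋃ j, B j) ∩ ⋂ i, (univ.pi fun _ => ⋃ j ≠ i, B j)ᶜ := by
  ext x
  simp only [permSaturation, mem_iUnion, mem_preimage, mem_univ_pi, Function.comp_apply,
    mem_inter_iff, mem_iInter, mem_compl_iff, not_forall, exists_prop]
  constructor
  · rintro ⟨σ, hσ⟩
    refine ⟨fun k => ⟨σ.symm k, by simpa using hσ (σ.symm k)⟩, fun i => ⟨σ i, ?_⟩⟩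
    rintro ⟨j, hji, hj⟩
    exact Set.disjoint_left.1 (hB hji) hj (hσ i)
  · rintro ⟨hcover, hhit⟩
    choose J hJ using hcover
    have hJ_surj : Function.Surjective J := fun i => by
      obtain ⟨k, hk⟩ := hhit i
      by_contra! hne
      exact hk ⟨J k, hne k, hJ k⟩
    let e := Equiv.ofBijective J hJ_surj.bijective_of_finite
    refine ⟨e.symm, fun i => ?_⟩
    have hi : J (e.symm i) = i := e.apply_symm_apply i
    simpa only [hi] using hJ (e.symm i)

theorem measurableSet_permSaturation_pi [Finite ι] [MeasurableSpace X]
    {m : MeasurableSpace (ι → X)}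
    (hpow : ∀ s : Set X, MeasurableSet s → MeasurableSet[m] (univ.pi fun _ => s))
    {B : ι → Set X} (hBm : ∀ i, MeasurableSet (B i)) (hB : Pairwise (Disjoint on B)) :
    MeasurableSet[m] (permSaturation (univ.pi B)) := by
  rw [permSaturation_pi_of_pairwise_disjoint hB]
  exact (hpow _ (.iUnion hBm)).inter
    (.iInter fun i => (hpow _ (.iUnion fun j => .iUnion fun _ => hBm j)).compl)

end PermSaturation

section GenAddr

variable {X : Type*} [MeasurableSpace X] [CountablyGenerated X]

-- The fibres of `genAddr m` form a finite measurable partition of `X` that refines as `m` grows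
-- and separates points in the limit.
def genAddr (m : ℕ) (x : X) : Set (Fin m) := {k | x ∈ natGeneratingSequence X k}

theorem measurable_genAddr (m : ℕ) : Measurable (genAddr (X := X) m) :=
  measurable_set_iff.2 fun k => measurable_mem.2 (measurableSet_natGeneratingSequence k)

theorem genAddr_eq_preimage_castLE {m M : ℕ} (h : m ≤ M) (x : X) :
    genAddr m x = Fin.castLE h ⁻¹' genAddr M x :=
  rfl

theorem eq_of_forall_genAddr_eq [MeasurableSingletonClass X] {x y : X}
    (h : ∀ m, genAddr m x = genAddr m y) : x = y := by
  have hmem (k : ℕ) : x ∈ natGeneratingSequence X k ↔ y ∈ natGeneratingSequence X k :=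
    Set.ext_iff.1 (h (k + 1)) (Fin.last k)
  have hy : y ∈ measurableAtom x := by
    rw [measurableAtom_eq_countablyGeneratedAtom_natGeneratingSequence]
    simp only [countablyGeneratedAtom, mem_iInter]
    intro k
    split_ifs with hk
    exacts [(hmem k).1 hk, fun hyk => hk ((hmem k).2 hyk)]
  simpa [eq_comm] using hy

variable {ι : Type*}

def genAddrs (m : ℕ) (x : ι → X) : ι → Set (Fin m) := fun i => genAddr m (x i)

theorem measurable_genAddrs (m : ℕ) : Measurable (genAddrs (ι := ι) (X := X) m) :=
  measurable_pi_lambda _ fun i => (measurable_genAddr m).comp (measurable_pi_apply i)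

theorem exists_genAddrs_preimage_eq_of_le {m M : ℕ} (h : m ≤ M) (U : Set (ι → Set (Fin m))) :
    ∃ U' : Set (ι → Set (Fin M)), genAddrs (X := X) m ⁻¹' U = genAddrs M ⁻¹' U' :=
  ⟨(fun u i => Fin.castLE h ⁻¹' u i) ⁻¹' U, rfl⟩

theorem genAddrs_preimage_eq_biUnion_pi (m : ℕ) (V : Set (ι → Set (Fin m))) :
    genAddrs (X := X) m ⁻¹' V = ⋃ u ∈ V, univ.pi fun i => genAddr m ⁻¹' {u i} := by
  ext x
  simp only [mem_preimage, mem_iUnion, mem_univ_pi, mem_singleton_iff, exists_prop]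
  exact ⟨fun hx => ⟨_, hx, fun _ => rfl⟩, fun ⟨u, hu, hxu⟩ => by rwa [← funext hxu] at hu⟩

variable (ι X) in
def genAddrCylinders : Set (Set (ι → X)) := {T | ∃ m U, T = genAddrs m ⁻¹' U}

theorem isSetAlgebra_genAddrCylinders : IsSetAlgebra (genAddrCylinders X ι) where
  empty_mem := ⟨0, ∅, rfl⟩
  compl_mem := by
    rintro _ ⟨m, U, rfl⟩
    exact ⟨m, Uᶜ, rfl⟩
  union_mem := by
    rintro _ _ ⟨m, U, rfl⟩ ⟨m', U', rfl⟩
    obtain ⟨V, hV⟩ := exists_genAddrs_preimage_eq_of_le (X := X) (le_max_left m m') U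
    obtain ⟨V', hV'⟩ := exists_genAddrs_preimage_eq_of_le (X := X) (le_max_right m m') U'
    exact ⟨_, V ∪ V', by rw [hV, hV', preimage_union]⟩

theorem generateFrom_genAddrCylinders [Finite ι] :
    generateFrom (genAddrCylinders X ι) = MeasurableSpace.pi := by
  refine le_antisymm (generateFrom_le ?_) (iSup_le fun i => ?_)
  · rintro _ ⟨m, U, rfl⟩
    exact measurable_genAddrs m (to_countable U).measurableSet
  · have h := @measurable_generateFrom _ _ (generateFrom (genAddrCylinders X ι))
      (range (natGeneratingSequence X)) (fun x : ι → X => x i) <| by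
        rintro _ ⟨k, rfl⟩
        exact measurableSet_generateFrom ⟨k + 1, {u | Fin.last k ∈ u i}, rfl⟩
    rw [generateFrom_natGeneratingSequence] at h
    exact h.comap_le

theorem eventually_exists_genAddrs_preimage_approx [Finite ι] (ν : Measure (ι → X))
    [IsFiniteMeasure ν] {E : Set (ι → X)} (hE : MeasurableSet E) {ε : ℝ≥0∞} (hε : 0 < ε) :
    ∀ᶠ m in atTop, ∃ U : Set (ι → Set (Fin m)), ν (E ∆ (genAddrs m ⁻¹' U)) ≤ ε := by
  obtain ⟨r, -, hr, hrε⟩ := ENNReal.lt_iff_exists_real_btwn.1 hε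
  obtain ⟨_, ⟨m, U, rfl⟩, hU⟩ :=
    (Measure.MeasureDense.of_generateFrom_isSetAlgebra_finite ν isSetAlgebra_genAddrCylinders
      generateFrom_genAddrCylinders.symm).approx E hE (measure_ne_top _ _) r
      (ENNReal.ofReal_pos.1 hr)
  refine eventually_atTop.2 ⟨m, fun M hM => ?_⟩
  obtain ⟨U', hU'⟩ := exists_genAddrs_preimage_eq_of_le (X := X) hM U
  exact ⟨U', hU' ▸ (hU.trans hrε).le⟩

theorem tendsto_measure_genAddrs_not_injective [Fintype ι] [MeasurableEq X] (μ : Measure X)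
    [IsProbabilityMeasure μ] [NullSingletonClass μ] :
    Tendsto (fun m => Measure.pi (fun _ : ι => μ) {x | ¬Injective (genAddrs m x)}) atTop
      (𝓝 0) := by
  classical
  set ν := Measure.pi fun _ : ι => μ
  have hpair {i j : ι} (hij : i ≠ j) :
      Tendsto (fun m => ν {x | genAddr m (x i) = genAddr m (x j)}) atTop (𝓝 0) := by
    have hanti : Antitone fun m => {x : ι → X | genAddr m (x i) = genAddr m (x j)} :=
      fun m M h x hx => by
        simp only [mem_ofPred_eq, genAddr_eq_preimage_castLE h] at hx ⊢
        rw [hx]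
    have hinter : ⋂ m, {x : ι → X | genAddr m (x i) = genAddr m (x j)} = {x | x i = x j} := by
      ext x
      simp only [mem_iInter, mem_ofPred_eq]
      exact ⟨eq_of_forall_genAddr_eq, fun h m => h ▸ rfl⟩
    have hmeas (m : ℕ) : NullMeasurableSet {x : ι → X | genAddr m (x i) = genAddr m (x j)} ν :=
      (measurableSet_eq_fun ((measurable_genAddr m).comp (measurable_pi_apply i))
        ((measurable_genAddr m).comp (measurable_pi_apply j))).nullMeasurableSet
    have h := tendsto_measure_iInter_atTop hmeas hanti ⟨0, measure_ne_top _ _⟩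
    rwa [hinter, measure_pi_setOf_apply_eq_apply μ hij] at h
  have hsum := tendsto_finsetSum Finset.univ.offDiag fun p hp =>
    hpair (Finset.mem_offDiag.1 hp).2.2
  refine tendsto_of_tendsto_of_tendsto_of_le_of_le tendsto_const_nhds (by simpa using hsum)
    (fun _ => zero_le) fun m => ?_
  refine (measure_mono fun x hx => ?_).trans (measure_biUnion_finset_le _ _)
  obtain ⟨i, j, hij, hne⟩ := not_injective_iff.1 hx
  exact mem_iUnion₂.2 ⟨(i, j), by simpa using hne, hij⟩

theorem exists_biUnion_pi_pairwise_disjoint_approx [Fintype ι] [MeasurableEq X] (μ : Measure X)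
    [IsProbabilityMeasure μ] [NullSingletonClass μ] {E : Set (ι → X)} (hE : MeasurableSet E)
    {ε : ℝ≥0∞} (hε : 0 < ε) :
    ∃ K : Set (ι → Set X), K.Countable ∧
      (∀ B ∈ K, (∀ i, MeasurableSet (B i)) ∧ Pairwise (Disjoint on B)) ∧
      Measure.pi (fun _ => μ) (E ∆ ⋃ B ∈ K, univ.pi B) ≤ ε := by
  set ν := Measure.pi fun _ : ι => μ
  have hε2 : 0 < ε / 2 := ENNReal.half_pos hε.ne'
  obtain ⟨m, ⟨U, hU⟩, hinj⟩ := ((eventually_exists_genAddrs_preimage_approx ν hE hε2).and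
    ((tendsto_order.1 (tendsto_measure_genAddrs_not_injective (ι := ι) μ)).2 _ hε2)).exists
  set V := U ∩ {u | Injective u}
  refine ⟨(fun u i => genAddr m ⁻¹' {u i}) '' V, (to_countable V).image _, ?_, ?_⟩
  · rintro _ ⟨u, hu, rfl⟩
    exact ⟨fun i => measurable_genAddr m (measurableSet_singleton _),
      fun i j hij => (disjoint_singleton.2 (hu.2.ne hij)).preimage _⟩
  · rw [biUnion_image, ← genAddrs_preimage_eq_biUnion_pi]
    have hUV : (genAddrs m ⁻¹' U) ∆ (genAddrs m ⁻¹' V) ⊆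
        {x : ι → X | ¬Injective (genAddrs m x)} := by
      intro x hx
      simp only [← preimage_symmDiff, mem_preimage, Set.mem_symmDiff, V, mem_inter_iff,
        mem_ofPred_eq] at hx
      tauto
    calc ν (E ∆ (genAddrs m ⁻¹' V))
        ≤ ν (E ∆ (genAddrs m ⁻¹' U)) + ν ((genAddrs m ⁻¹' U) ∆ (genAddrs m ⁻¹' V)) :=
          measure_symmDiff_le _ _ _
      _ ≤ ε / 2 + ε / 2 := add_le_add hU ((measure_mono hUV).trans hinj.le)
      _ = ε := ENNReal.add_halves ε

end GenAddr

abbrev fixedPowSigma (G : Type*) {X : Type*} [SMul G X] (n : ℕ) : MeasurableSpace (Fin n → X) :=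
  generateFrom {s | ∃ g : G, s = fixedPow G n g}

theorem fixedPow_eq_pi {G X : Type*} [SMul G X] (n : ℕ) (g : G) :
    fixedPow (X := X) G n g = univ.pi fun _ => fixedSet G g := by
  ext x
  simp [fixedPow, fixedSet]

section AbsolutelyNonFree

variable {G X : Type*} [Group G] [MulAction G X] [MeasurableSpace X] {μ : Measure X}

theorem AbsolutelyNonFree.nullSingletonClass [MeasurableSingletonClass X]
    (hmp : ∀ g : G, MeasurePreserving (fun x : X => g • x) μ μ) (hanf : AbsolutelyNonFree G μ) :
    NullSingletonClass μ := by
  refine ⟨fun a => ?_⟩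
  by_contra ha
  obtain ⟨g, hg⟩ := hanf {a}ᶜ (measurableSet_singleton a).compl _ (pos_iff_ne_zero.2 ha)
  have hfix_iff {b : X} (hb : μ {b} = μ {a}) : b ∈ fixedSet G g ↔ b ≠ a := by
    by_contra hne
    refine (hb ▸ hg).not_ge (measure_mono (singleton_subset_iff.2 ?_))
    rw [Set.mem_symmDiff, mem_compl_singleton_iff]
    tauto
  have hga : μ {g • a} = μ {a} := by
    rw [← (hmp g).measure_preimage (measurableSet_singleton _).nullMeasurableSet,
      preimage_smul, smul_set_singleton, inv_smul_smul]
  have hmoved : g • a ≠ a := fun h => (hfix_iff rfl).1 h rfl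
  exact hmoved (MulAction.injective g ((hfix_iff hga).2 hmoved))

theorem AbsolutelyNonFree.measurableSet_nullClosure_pi [IsProbabilityMeasure μ]
    (hanf : AbsolutelyNonFree G μ) (n : ℕ) (B : Set X) (hB : MeasurableSet B) :
    MeasurableSet[(Measure.pi fun _ => μ).nullClosure (fixedPowSigma G n)]
      (univ.pi fun _ : Fin n => B) := by
  refine Measure.measurableSet_nullClosure_of_forall_approx fun ε hε => ?_
  obtain ⟨g, hg⟩ := hanf B hB (ε / n) (ENNReal.div_pos hε.ne' (ENNReal.natCast_ne_top n))
  refine ⟨fixedPow G n g, Measure.le_nullClosure _ _ _ (measurableSet_generateFrom ⟨g, rfl⟩), ?_⟩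
  calc _ ≤ ∑ _ : Fin n, μ (B ∆ fixedSet G g) := by
        rw [fixedPow_eq_pi]
        exact measure_pi_symmDiff_pi_le _ _ _
    _ ≤ n * (ε / n) := by
        rw [Finset.sum_const, Finset.card_univ, Fintype.card_fin, nsmul_eq_mul, symmDiff_comm]
        gcongr
    _ ≤ ε := ENNReal.mul_div_le

end AbsolutelyNonFree

theorem symmetrizedDiagonal_totallyNonFree_of_absolutelyNonFree_general
    {G X : Type*} [Group G] [MulAction G X]
    [MeasurableSpace X] [StandardBorelSpace X]
    (μ : Measure X) [IsProbabilityMeasure μ]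
    (hmp : ∀ g : G, MeasurePreserving (fun x : X => g • x) μ μ)
    (hanf : AbsolutelyNonFree G μ)
    (n : ℕ) :
    ∀ E : Set (Fin n → X), MeasurableSet E →
      (∀ σ : Equiv.Perm (Fin n), (fun x : Fin n → X => x ∘ σ) ⁻¹' E = E) →
      ∃ A : Set (Fin n → X),
        MeasurableSet[MeasurableSpace.generateFrom
          {s : Set (Fin n → X) | ∃ g : G, s = fixedPow G n g}] A ∧
        (Measure.pi fun _ : Fin n => μ) (E ∆ A) = 0 := by
  intro E hE hEsym
  have : NullSingletonClass μ := hanf.nullSingletonClass hmp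
  suffices hE' : MeasurableSet[(Measure.pi fun _ => μ).nullClosure (fixedPowSigma G n)] E from hE'
  refine Measure.measurableSet_nullClosure_of_forall_approx fun ε hε => ?_
  obtain ⟨K, hK, hKB, hEK⟩ := exists_biUnion_pi_pairwise_disjoint_approx μ hE
    (ENNReal.div_pos hε.ne' (ENNReal.natCast_ne_top (Fintype.card (Equiv.Perm (Fin n)))))
  refine ⟨permSaturation (⋃ B ∈ K, univ.pi B), ?_, ?_⟩
  · rw [permSaturation_biUnion]
    exact .biUnion hK fun B hB => measurableSet_permSaturation_pi
      (hanf.measurableSet_nullClosure_pi n) (hKB B hB).1 (hKB B hB).2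
  · calc _ ≤ _ := measure_symmDiff_permSaturation_le μ hEsym _
      _ ≤ _ := by gcongr
      _ ≤ ε := ENNReal.mul_div_le

/-- If a countable group acts absolutely non-freely on a standard Borel probability space, then
for every `n ≥ 1` the symmetrized diagonal action on `Xⁿ` is totally non-free: every measurable
set invariant under all coordinate permutations agrees, up to a `μⁿ`-null symmetric difference,
with a set in the σ-algebra generated by the sets `Fix(g)ⁿ`, `g ∈ G`. -/
theorem symmetrizedDiagonal_totallyNonFree_of_absolutelyNonFree
    {G X : Type*} [Group G] [Countable G] [MulAction G X]
    [MeasurableSpace X] [StandardBorelSpace X]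
    (μ : Measure X) [IsProbabilityMeasure μ]
    (hmeas : ∀ g : G, Measurable fun x : X => g • x)
    (hmp : ∀ g : G, MeasurePreserving (fun x : X => g • x) μ μ)
    (hanf : AbsolutelyNonFree G μ)
    (n : ℕ) (hn : 1 ≤ n) :
    ∀ E : Set (Fin n → X), MeasurableSet E →
      (∀ σ : Equiv.Perm (Fin n), (fun x : Fin n → X => x ∘ σ) ⁻¹' E = E) →
      ∃ A : Set (Fin n → X),
        MeasurableSet[MeasurableSpace.generateFrom
          {s : Set (Fin n → X) | ∃ g : G, s = fixedPow G n g}] A ∧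
        (Measure.pi fun _ : Fin n => μ) (E ∆ A) = 0 :=
  symmetrizedDiagonal_totallyNonFree_of_absolutelyNonFree_general μ hmp hanf n
end

section
/- Let a countable group G act by measurable measure-preserving transformations, ergodically, on a standard Borel probability space (X, μ), and assume that comm_G(St_G(x)) = St_G(x) for μ-almost every x ∈ X. Then ξ is, up to scalar multiples, the unique vector in L²(X×X, ν) fixed by the diagonal part of ρ: every f ∈ L²(X×X, ν) satisfying ρ(g,g)f = f for all g ∈ G is a scalar multiple of ξ. -/
/-!
For a.e. `x`, an invariant `f ∈ L²(ν)` restricts to square-summable functions `y ↦ f (y, x)` and,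
by the mass transport principle, `y ↦ f (x, y)` on the orbit of `x`; both are invariant under the
relevant stabilizers. If `f (g • x, x) ≠ 0`, then the `St(x)`-orbit of `g • x` and the
`St(g • x)`-orbit of `x` lie in finite level sets of these functions, so `St(x) ∩ St(g • x)` has
finite index in both stabilizers, `g` commensurates `St(x)`, and self-commensuration forces
`g • x = x`. Thus `f` vanishes off the diagonal, and on it `x ↦ f (x, x)` is invariant, hence
constant by ergodicity.
-/

open MeasureTheory
open scoped Pointwise ENNReal

/-- `ν` is the groupoid measure on `X × X` associated with the action of `G` on `(X, μ)`:
`ν(A) = ∫ #{y ∈ G·x : (y, x) ∈ A} dμ(x)`. -/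
def IsGroupoidMeasure (G : Type*) {X : Type*} [Group G] [MulAction G X] [MeasurableSpace X]
    (μ : Measure X) (ν : Measure (X × X)) : Prop :=
  ∀ A : Set (X × X), MeasurableSet A →
    ν A = ∫⁻ x, ({y : X | y ∈ MulAction.orbit G x ∧ (y, x) ∈ A}.encard : ℝ≥0∞) ∂μ

open MulAction Subgroup.Commensurable

section

variable {G X : Type*} [Group G] [MulAction G X]

theorem stabilizer_smul_eq_toConjAct_smul (g : G) (x : X) :
    stabilizer G (g • x) = ConjAct.toConjAct g • stabilizer G x := by
  ext h
  rw [Subgroup.mem_pointwise_smul_iff_inv_smul_mem, ← ConjAct.toConjAct_inv,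
    ConjAct.toConjAct_smul, mem_stabilizer_iff, mem_stabilizer_iff, mul_smul, mul_smul,
    inv_smul_eq_iff, inv_inv]

theorem relIndex_stabilizer_ne_zero {x y : X} (h : (orbit (stabilizer G x) y).Finite) :
    (stabilizer G y).relIndex (stabilizer G x) ≠ 0 := by
  have : (stabilizer G y).subgroupOf (stabilizer G x) = stabilizer (stabilizer G x) y := by
    ext; rfl
  rw [Subgroup.relIndex, this, index_stabilizer]
  exact ((Set.ncard_pos h).2 ⟨y, mem_orbit_self y⟩).ne'

theorem mem_commensurator_stabilizer {g : G} {x : X}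
    (h₁ : (orbit (stabilizer G x) (g • x)).Finite) (h₂ : (orbit (stabilizer G (g • x)) x).Finite) :
    g ∈ commensurator (stabilizer G x) := by
  rw [commensurator_mem_iff, ← stabilizer_smul_eq_toConjAct_smul]
  exact ⟨relIndex_stabilizer_ne_zero h₁, relIndex_stabilizer_ne_zero h₂⟩

theorem finite_orbit_stabilizer_of_tsum_ne_top {x y : X} {φ : X → ℝ≥0∞}
    (hφ : ∑' z : orbit G x, φ z ≠ ∞) (hinv : ∀ h ∈ stabilizer G x, ∀ z ∈ orbit G x, φ (h • z) = φ z)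
    (hy : y ∈ orbit G x) (hφy : φ y ≠ 0) : (orbit (stabilizer G x) y).Finite := by
  refine ((ENNReal.finite_const_le_of_tsum_ne_top hφ hφy).image Subtype.val).subset ?_
  rintro _ ⟨h, rfl⟩
  obtain ⟨g, rfl⟩ := hy
  exact ⟨⟨_, (h : G) * g, mul_smul _ _ _⟩, (hinv h h.2 _ (mem_orbit x g)).ge, rfl⟩

theorem eq_of_invariant_of_commensurator_stabilizer_eq {q : X × X → ℝ≥0∞} {x y : X}
    (hinv : ∀ w ∈ orbit G x, ∀ z ∈ orbit G w, ∀ g : G, q (g • z, g • w) = q (z, w))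
    (hx : ∑' z : orbit G x, q (z, x) ≠ ∞) (hy : ∑' z : orbit G y, q (y, z) ≠ ∞)
    (hcomm : commensurator (stabilizer G x) = stabilizer G x)
    (hyx : y ∈ orbit G x) (hq : q (y, x) ≠ 0) : y = x := by
  obtain ⟨g, rfl⟩ : ∃ g : G, g • x = y := hyx
  have h₁ : (orbit (stabilizer G x) (g • x)).Finite := by
    refine finite_orbit_stabilizer_of_tsum_ne_top (φ := fun z => q (z, x)) hx
      (fun h hh z hz => ?_) (mem_orbit x g) hq
    simpa only [mem_stabilizer_iff.1 hh] using hinv x (mem_orbit_self x) z hz h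
  have h₂ : (orbit (stabilizer G (g • x)) x).Finite := by
    refine finite_orbit_stabilizer_of_tsum_ne_top (φ := fun z => q (g • x, z)) hy
      (fun h hh z hz => ?_) (mem_orbit_smul g x) hq
    have hzx : z ∈ orbit G x := by rwa [← orbit_smul g x]
    simpa only [mem_stabilizer_iff.1 hh] using
      hinv z hzx (g • x) (by rw [orbit_eq_iff.2 hz]; exact mem_orbit_self _) h
  have hg := mem_commensurator_stabilizer h₁ h₂
  rwa [hcomm, mem_stabilizer_iff] at hg

def IsOrbitEnumeration (g : ℕ → G) (S : ℕ → Set X) : Prop :=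
  ∀ x, Set.BijOn (fun n => g n • x) {n | x ∈ S n} (orbit G x)

variable {g : ℕ → G} {S : ℕ → Set X}

theorem IsOrbitEnumeration.tsum_indicator (hgS : IsOrbitEnumeration g S) (h : X × X → ℝ≥0∞)
    (x : X) : ∑' n, (S n).indicator (fun z => h (g n • z, z)) x = ∑' y : orbit G x, h (y, x) := by
  calc ∑' n, (S n).indicator (fun z => h (g n • z, z)) x
      = ∑' n : {n | x ∈ S n}, h (g n • x, x) := by
        rw [tsum_subtype {n | x ∈ S n} fun n => h (g n • x, x)]
        congr 1 with n
    _ = ∑' y : orbit G x, h (y, x) := Equiv.tsum_eq ((hgS x).equiv _) fun y => h (y, x)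

theorem IsOrbitEnumeration.inv (hgS : IsOrbitEnumeration g S) :
    IsOrbitEnumeration (fun n => (g n)⁻¹) (fun n => {z | (g n)⁻¹ • z ∈ S n}) := by
  intro x
  refine ⟨fun n _ => mem_orbit x _, fun m hm n hn hmn => ?_, fun y hy => ?_⟩
  · have hmn : (g m)⁻¹ • x = (g n)⁻¹ • x := hmn
    refine (hgS _).injOn hm (show (g m)⁻¹ • x ∈ S n by rw [hmn]; exact hn) ?_
    rw [smul_inv_smul, hmn, smul_inv_smul]
  · obtain ⟨n, hn, hxy⟩ := (hgS y).surjOn (orbit_eq_iff.1 (orbit_eq_iff.2 hy).symm)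
    have hy : (g n)⁻¹ • x = y := by rw [← hxy, inv_smul_smul]
    exact ⟨n, show (g n)⁻¹ • x ∈ S n from hy ▸ hn, hy⟩

variable [MeasurableSpace X] {μ : Measure X} {ν : Measure (X × X)}

theorem exists_isOrbitEnumeration_measurableSet [Countable G]
    (hmeas : ∀ g : G, Measurable (g • · : X → X)) (hD : MeasurableSet (Set.diagonal X)) :
    ∃ (g : ℕ → G) (S : ℕ → Set X), IsOrbitEnumeration g S ∧ ∀ n, MeasurableSet (S n) := by
  obtain ⟨e, he⟩ := exists_surjective_nat G
  refine ⟨e, fun n => {x | ∀ m < n, e m • x ≠ e n • x}, fun x => ⟨fun n _ => mem_orbit x _,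
    fun m hm n hn hmn => ?_, fun y hy => ?_⟩, fun n => ?_⟩
  · rcases lt_trichotomy m n with hlt | rfl | hlt
    exacts [absurd hmn (hn m hlt), rfl, absurd hmn.symm (hm n hlt)]
  · classical
    have hex : ∃ n, e n • x = y := by
      obtain ⟨g, rfl⟩ := hy
      obtain ⟨n, rfl⟩ := he g
      exact ⟨n, rfl⟩
    exact ⟨Nat.find hex, fun m hm hmx => Nat.find_min hex hm (hmx.trans (Nat.find_spec hex)),
      Nat.find_spec hex⟩
  · simp only [Set.ofPred_forall]
    exact .iInter fun m => .iInter fun _ => (((hmeas _).prodMk (hmeas _)) hD).compl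

theorem IsOrbitEnumeration.lintegral_tsum_orbit (hgS : IsOrbitEnumeration g S)
    (hS : ∀ n, MeasurableSet (S n)) (hmeas : ∀ g : G, Measurable (g • · : X → X))
    {h : X × X → ℝ≥0∞} (hh : Measurable h) :
    ∫⁻ x, ∑' y : orbit G x, h (y, x) ∂μ = ∑' n, ∫⁻ x in S n, h (g n • x, x) ∂μ := by
  simp_rw [← hgS.tsum_indicator h]
  refine (lintegral_tsum fun n => ?_).trans (tsum_congr fun n => lintegral_indicator (hS n) _)
  exact ((hh.comp ((hmeas _).prodMk measurable_id)).indicator (hS n)).aemeasurable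

theorem IsOrbitEnumeration.measurable_tsum_orbit (hgS : IsOrbitEnumeration g S)
    (hS : ∀ n, MeasurableSet (S n)) (hmeas : ∀ g : G, Measurable (g • · : X → X))
    {h : X × X → ℝ≥0∞} (hh : Measurable h) :
    Measurable fun x => ∑' y : orbit G x, h (y, x) := by
  simp_rw [← hgS.tsum_indicator h]
  exact .tsum fun n => (hh.comp ((hmeas _).prodMk measurable_id)).indicator (hS n)

theorem ae_tsum_orbit_ne_top [Countable G] (hmeas : ∀ g : G, Measurable (g • · : X → X))
    (hD : MeasurableSet (Set.diagonal X)) {h : X × X → ℝ≥0∞} (hh : Measurable h)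
    (hfin : ∫⁻ x, ∑' y : orbit G x, h (y, x) ∂μ ≠ ∞) :
    ∀ᵐ x ∂μ, ∑' y : orbit G x, h (y, x) ≠ ∞ := by
  obtain ⟨g, S, hgS, hS⟩ := exists_isOrbitEnumeration_measurableSet hmeas hD
  exact (ae_lt_top (hgS.measurable_tsum_orbit hS hmeas hh) hfin).mono fun _ => ne_of_lt

/-- Mass transport principle: substituting `x ↦ (g n)⁻¹ • x` in the `n`-th term of an orbit
enumeration turns it into the inverse enumeration. -/
theorem lintegral_tsum_orbit_swap [Countable G]
    (hmp : ∀ g : G, MeasurePreserving (g • · : X → X) μ μ) (hD : MeasurableSet (Set.diagonal X))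
    {h : X × X → ℝ≥0∞} (hh : Measurable h) :
    ∫⁻ x, ∑' y : orbit G x, h (x, y) ∂μ = ∫⁻ x, ∑' y : orbit G x, h (y, x) ∂μ := by
  have hmeas g := (hmp g).measurable
  obtain ⟨g, S, hgS, hS⟩ := exists_isOrbitEnumeration_measurableSet hmeas hD
  rw [hgS.lintegral_tsum_orbit hS hmeas hh]
  refine (hgS.inv.lintegral_tsum_orbit (h := fun p => h p.swap) (fun n => hmeas _ (hS n)) hmeas
    (hh.comp measurable_swap)).trans (tsum_congr fun n => ?_)
  have := (hmp (g n)⁻¹).setLIntegral_comp_preimage (hS n) (f := fun x => h (g n • x, x))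
    (hh.comp ((hmeas (g n)).prodMk measurable_id))
  simp only [smul_inv_smul] at this
  exact this

theorem ae_forall_smul [Countable G] (hmp : ∀ g : G, MeasurePreserving (g • · : X → X) μ μ)
    {P : X → Prop} (h : ∀ᵐ x ∂μ, P x) : ∀ᵐ x ∂μ, ∀ g : G, P (g • x) :=
  ae_all_iff.2 fun g => (hmp g).quasiMeasurePreserving.ae h

theorem ae_eq_const_of_ae_smul_eq [Countable G] [IsProbabilityMeasure μ]
    (hmeas : ∀ g : G, Measurable (g • · : X → X))
    (herg : ∀ E : Set X, MeasurableSet E → (∀ g : G, g • E = E) → μ E = 0 ∨ μ E = 1)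
    {Y : Type*} [MeasurableSpace Y] [MeasurableSpace.CountablySeparated Y] [Nonempty Y]
    {D : X → Y} (hD : Measurable D) (hinv : ∀ᵐ x ∂μ, ∀ g : G, D (g • x) = D x) :
    ∃ c, ∀ᵐ x ∂μ, D x = c := by
  refine Filter.exists_eventuallyEq_const_of_forall_separating MeasurableSet fun U hU => ?_
  -- a strictly invariant set, a.e. equal to `D ⁻¹' U`, to which `herg` applies
  set E := {x | ∀ g : G, D (g • x) ∈ U}
  have hE : MeasurableSet E := by
    simp only [E, Set.ofPred_forall]
    exact .iInter fun g => (hD.comp (hmeas g)) hU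
  have hE_inv (g : G) : g • E = E := by
    ext x
    simp only [Set.mem_smul_set_iff_inv_smul_mem, E, Set.mem_ofPred_eq]
    exact ⟨fun h k => by simpa [mul_smul] using h (k * g),
      fun h k => by simpa [mul_smul] using h (k * g⁻¹)⟩
  have hEU : ∀ᵐ x ∂μ, x ∈ E ↔ D x ∈ U := hinv.mono fun x hx => by simp [E, hx]
  rcases herg E hE hE_inv with h₀ | h₁
  · right
    filter_upwards [measure_eq_zero_iff_ae_notMem.1 h₀, hEU] with x hx hxU
    exact fun h => hx (hxU.2 h)
  · left
    filter_upwards [(ae_iff_measure_eq hE.nullMeasurableSet).2 (by rw [h₁, measure_univ]), hEU]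
      with x hx hxU
    exact hxU.1 hx

namespace IsGroupoidMeasure

theorem eq_sum_map (hν : IsGroupoidMeasure G μ ν) {g : ℕ → G} {S : ℕ → Set X}
    (hgS : IsOrbitEnumeration g S) (hS : ∀ n, MeasurableSet (S n))
    (hmeas : ∀ g : G, Measurable (g • · : X → X)) :
    ν = Measure.sum fun n => (μ.restrict (S n)).map fun x => (g n • x, x) := by
  ext A hA
  have hcard (x : X) : ({y | y ∈ orbit G x ∧ (y, x) ∈ A}.encard : ℝ≥0∞)
      = ∑' y : orbit G x, A.indicator 1 (y, x) := by
    rw [← ENNReal.tsum_set_one, tsum_subtype _ fun _ => 1,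
      tsum_subtype _ fun y => A.indicator 1 (y, x)]
    congr 1 with y
    by_cases hy : y ∈ orbit G x <;> by_cases hyA : (y, x) ∈ A <;> simp [hy, hyA]
  rw [hν A hA, lintegral_congr hcard,
    hgS.lintegral_tsum_orbit hS hmeas (measurable_one.indicator hA), Measure.sum_apply _ hA]
  refine tsum_congr fun n => ?_
  have hm : Measurable fun x => (g n • x, x) := (hmeas _).prodMk measurable_id
  rw [Measure.map_apply hm hA, ← lintegral_indicator_one (hm hA)]
  rfl

theorem lintegral_eq [Countable G] (hν : IsGroupoidMeasure G μ ν)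
    (hmeas : ∀ g : G, Measurable (g • · : X → X)) (hD : MeasurableSet (Set.diagonal X))
    {h : X × X → ℝ≥0∞} (hh : Measurable h) :
    ∫⁻ p, h p ∂ν = ∫⁻ x, ∑' y : orbit G x, h (y, x) ∂μ := by
  obtain ⟨g, S, hgS, hS⟩ := exists_isOrbitEnumeration_measurableSet hmeas hD
  rw [hν.eq_sum_map hgS hS hmeas, lintegral_sum_measure, hgS.lintegral_tsum_orbit hS hmeas hh]
  exact tsum_congr fun n => lintegral_map hh ((hmeas _).prodMk measurable_id)

theorem ae_orbit_of_ae [Countable G] (hν : IsGroupoidMeasure G μ ν)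
    (hmeas : ∀ g : G, Measurable (g • · : X → X)) {P : X × X → Prop} (hP : ∀ᵐ p ∂ν, P p) :
    ∀ᵐ x ∂μ, ∀ y ∈ orbit G x, P (y, x) := by
  set T := toMeasurable ν {p | ¬P p}
  have hT : MeasurableSet T := measurableSet_toMeasurable ν _
  have hTx (g : G) : ∀ᵐ x ∂μ, (g • x, x) ∉ T := by
    have hm : MeasurableSet {x | (g • x, x) ∈ T} := ((hmeas g).prodMk measurable_id) hT
    refine measure_eq_zero_iff_ae_notMem.1 (nonpos_iff_eq_zero.1 ?_)
    calc μ {x | (g • x, x) ∈ T}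
        = ∫⁻ x, {x | (g • x, x) ∈ T}.indicator 1 x ∂μ := (lintegral_indicator_one hm).symm
      _ ≤ ∫⁻ x, ({y | y ∈ orbit G x ∧ (y, x) ∈ T}.encard : ℝ≥0∞) ∂μ := by
        refine lintegral_mono (Set.indicator_le fun x hx => ?_)
        have hne : ({y | y ∈ orbit G x ∧ (y, x) ∈ T} : Set X).Nonempty :=
          ⟨g • x, mem_orbit x g, hx⟩
        rw [Pi.one_apply]
        exact_mod_cast Set.one_le_encard_iff_nonempty.2 hne
      _ = ν T := (hν T hT).symm
      _ = 0 := by rw [measure_toMeasurable]; exact hP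
  filter_upwards [ae_all_iff.2 hTx] with x hx y ⟨g, hg⟩
  subst hg
  by_contra hPy
  exact hx g (subset_toMeasurable ν _ hPy)

theorem ae_of_ae_orbit (hν : IsGroupoidMeasure G μ ν) {P : X × X → Prop}
    (hP : MeasurableSet {p | P p}) (h : ∀ᵐ x ∂μ, ∀ y ∈ orbit G x, P (y, x)) : ∀ᵐ p ∂ν, P p := by
  change ν {p | P p}ᶜ = 0
  rw [hν _ hP.compl]
  refine (lintegral_congr_ae (h.mono fun x hx => ?_)).trans lintegral_zero
  simpa [Set.eq_empty_iff_forall_notMem] using hx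

theorem ae_eq_zero_of_ne [Countable G] (hν : IsGroupoidMeasure G μ ν)
    (hmp : ∀ g : G, MeasurePreserving (g • · : X → X) μ μ) (hD : MeasurableSet (Set.diagonal X))
    (hcomm : ∀ᵐ x ∂μ, commensurator (stabilizer G x) = stabilizer G x)
    {q : X × X → ℝ≥0∞} (hq : Measurable q) (hq_fin : ∫⁻ p, q p ∂ν ≠ ∞)
    (hq_inv : ∀ᵐ p ∂ν, ∀ g : G, q (g • p.1, g • p.2) = q p) :
    ∀ᵐ p ∂ν, p.1 ≠ p.2 → q p = 0 := by
  have hmeas g := (hmp g).measurable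
  rw [hν.lintegral_eq hmeas hD hq] at hq_fin
  have hleft := ae_tsum_orbit_ne_top hmeas hD hq hq_fin
  have hright := ae_tsum_orbit_ne_top (μ := μ) hmeas hD (h := fun p => q p.swap)
    (hq.comp measurable_swap)
    (by simpa only [Prod.swap_prod_mk, lintegral_tsum_orbit_swap hmp hD hq] using hq_fin)
  have hgood := ae_forall_smul hmp <| (hν.ae_orbit_of_ae hmeas hq_inv).and hright
  refine hν.ae_of_ae_orbit (hD.compl.imp (hq (measurableSet_singleton 0))) ?_
  filter_upwards [hgood, hleft, hcomm] with x hx hxl hxc y hy hne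
  obtain ⟨g, rfl⟩ : ∃ g : G, g • x = y := hy
  by_contra hq0
  refine hne (eq_of_invariant_of_commensurator_stabilizer_eq (fun w ⟨k, hk⟩ z hz => ?_) hxl
    (hx g).2 hxc (mem_orbit x g) hq0)
  subst hk
  exact (hx k).1 z hz

end IsGroupoidMeasure

end

theorem unique_diagonal_invariant_vector_general
    {G X : Type*} [Group G] [Countable G] [MulAction G X]
    [MeasurableSpace X]
    (μ : Measure X) [IsProbabilityMeasure μ]
    (hmp : ∀ g : G, MeasurePreserving (fun x : X => g • x) μ μ)
    (herg : ∀ E : Set X, MeasurableSet E → (∀ g : G, g • E = E) → μ E = 0 ∨ μ E = 1)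
    (hcomm : ∀ᵐ x ∂μ,
      Subgroup.Commensurable.commensurator (MulAction.stabilizer G x) = MulAction.stabilizer G x)
    (ν : Measure (X × X)) (hν : IsGroupoidMeasure G μ ν)
    (hD : MeasurableSet (Set.diagonal X))
    (hDfin : ν (Set.diagonal X) ≠ ⊤) :
    ∀ f : Lp ℂ 2 ν,
      (∀ g : G, (fun p : X × X => f (g⁻¹ • p.1, g⁻¹ • p.2)) =ᵐ[ν] ⇑f) →
      ∃ c : ℂ, f = c • (indicatorConstLp 2 hD hDfin (1 : ℂ)) := by
  intro f hf
  have hmeas g := (hmp g).measurable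
  have hf_meas : Measurable f := (Lp.stronglyMeasurable f).measurable
  have hf_inv : ∀ᵐ p ∂ν, ∀ g : G, f (g • p.1, g • p.2) = f p :=
    ae_all_iff.2 fun g => by
      have h := hf g⁻¹
      simp only [inv_inv] at h
      exact h
  have hoff : ∀ᵐ p ∂ν, p.1 ≠ p.2 → f p = 0 :=
    (hν.ae_eq_zero_of_ne hmp hD hcomm (by fun_prop)
      (lintegral_rpow_enorm_lt_top_of_eLpNorm_lt_top two_ne_zero ENNReal.ofNat_ne_top
        (Lp.eLpNorm_lt_top f)).ne
      (hf_inv.mono fun p hp g => by rw [hp g])).mono fun p hp hne => by simpa using hp hne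
  obtain ⟨c, hc⟩ : ∃ c, ∀ᵐ x ∂μ, f (x, x) = c :=
    ae_eq_const_of_ae_smul_eq hmeas herg (hf_meas.comp (measurable_id.prodMk measurable_id))
      ((hν.ae_orbit_of_ae hmeas hf_inv).mono fun x hx => by simpa using hx x (mem_orbit_self x))
  have hdiag : ∀ᵐ p ∂ν, p.1 = p.2 → f p = c :=
    hν.ae_of_ae_orbit (hD.imp (measurableSet_eq_fun hf_meas measurable_const))
      (hc.mono fun x hx y _ (hyx : y = x) => hyx ▸ hx)
  refine ⟨c, Lp.ext ?_⟩
  filter_upwards [hoff, hdiag, Lp.coeFn_smul c (indicatorConstLp 2 hD hDfin (1 : ℂ)),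
    indicatorConstLp_coeFn (p := 2) (hs := hD) (hμs := hDfin) (c := (1 : ℂ))]
    with p hp_off hp_diag hp_smul hp_ind
  rw [hp_smul, Pi.smul_apply, hp_ind]
  by_cases hp : p.1 = p.2
  · simp [hp_diag hp, Set.indicator_of_mem (show p ∈ Set.diagonal X from hp)]
  · simp [hp_off hp, Set.indicator_of_notMem (show p ∉ Set.diagonal X from hp)]

/-- For an ergodic measure-preserving action of a countable group `G` on a standard Borel
probability space such that almost every stabilizer is self-commensurating, the diagonal vector
`ξ ∈ L²(X×X, ν)` (the class of the indicator of the diagonal) is, up to scalar multiples, the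
unique vector fixed by `ρ(g, g)` for all `g ∈ G`. -/
theorem unique_diagonal_invariant_vector
    {G X : Type*} [Group G] [Countable G] [MulAction G X]
    [MeasurableSpace X] [StandardBorelSpace X]
    (μ : Measure X) [IsProbabilityMeasure μ]
    (hmeas : ∀ g : G, Measurable fun x : X => g • x)
    (hmp : ∀ g : G, MeasurePreserving (fun x : X => g • x) μ μ)
    (herg : ∀ E : Set X, MeasurableSet E → (∀ g : G, g • E = E) → μ E = 0 ∨ μ E = 1)
    (hcomm : ∀ᵐ x ∂μ,
      Subgroup.Commensurable.commensurator (MulAction.stabilizer G x) = MulAction.stabilizer G x)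
    (ν : Measure (X × X)) (hν : IsGroupoidMeasure G μ ν)
    (hD : MeasurableSet (Set.diagonal X))
    (hDfin : ν (Set.diagonal X) ≠ ⊤) (hD1 : ν (Set.diagonal X) = 1) :
    ∀ f : Lp ℂ 2 ν,
      (∀ g : G, (fun p : X × X => f (g⁻¹ • p.1, g⁻¹ • p.2)) =ᵐ[ν] ⇑f) →
      ∃ c : ℂ, f = c • (indicatorConstLp 2 hD hDfin (1 : ℂ)) :=
  unique_diagonal_invariant_vector_general μ hmp herg hcomm ν hν hD hDfin
end
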